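/- arXiv:2511.20367 — 3 statements merged into one kernel-verified Lean document; each statement's English description precedes it below -/
import Mathlib

section
/- The property of being a maximal Roman dominating function is a nice Roman domination property; concretely, for every finite simple graph G=(V,E) and every maximal Roman dominating function f on G: (i) for every v ∈ V_0(f), the function f + χ_{{v}} is a maximal Roman dominating function; and (ii) for every v ∈ V_2(f), the function f − χ_{{v}} is a maximal Roman dominating function if and only if P_{G[V_0(f) ∪ V_2(f)], V_2(f)}(v) ⊆ {v}. -/
open Set

variable {V : Type*}

/-- The set of vertices on which `f` takes value `i`. -/
def Vlevel (f : V → ℕ) (i : ℕ) : Set V := {v | f v = i}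

/-- Closed neighborhood of `v` inside the induced subgraph `G[W]`. -/
def closedNbhdIn (G : SimpleGraph V) (W : Set V) (v : V) : Set V :=
  {u ∈ W | u = v ∨ G.Adj u v}

/-- Closed neighborhood of a set `A` inside the induced subgraph `G[W]`. -/
def closedNbhdSetIn (G : SimpleGraph V) (W A : Set V) : Set V :=
  ⋃ u ∈ A, closedNbhdIn G W u

/-- Private neighborhood `P_{G[W],A}(v) = N[v] \ N[A \ {v}]` inside `G[W]`. -/
def privNbhd (G : SimpleGraph V) (W A : Set V) (v : V) : Set V :=
  closedNbhdIn G W v \ closedNbhdSetIn G W (A \ {v})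

/-- Closed neighborhood `N[v]` in `G`. -/
def closedNbhd (G : SimpleGraph V) (v : V) : Set V := {u | u = v ∨ G.Adj u v}

/-- Closed neighborhood `N[A]` of a set in `G`. -/
def closedNbhdSet (G : SimpleGraph V) (A : Set V) : Set V := ⋃ v ∈ A, closedNbhd G v

/-- Open neighborhood `N(A)` of a set in `G`. -/
def openNbhdSet (G : SimpleGraph V) (A : Set V) : Set V := ⋃ v ∈ A, G.neighborSet v

/-- Characteristic function of a set. -/
noncomputable def chi (S : Set V) : V → ℕ := S.indicator 1

/-- Roman dominating function: values in {0,1,2}, and every vertex of value 0 has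
a neighbor of value 2. -/
def IsRDF (G : SimpleGraph V) (f : V → ℕ) : Prop :=
  (∀ v, f v ≤ 2) ∧ ∀ v, f v = 0 → ∃ u, G.Adj v u ∧ f u = 2

/-- `f` is minimal with respect to the pointwise order among functions with property `P`. -/
def MinimalWrt (P : (V → ℕ) → Prop) (f : V → ℕ) : Prop :=
  P f ∧ ∀ g, P g → g ≤ f → g = f

/-- `C_{P,G}[A]`: minimal functions with property `P` whose set of vertices of value 2 is `A`. -/
def CSet (P : (V → ℕ) → Prop) (A : Set V) : Set (V → ℕ) :=
  {f | MinimalWrt P f ∧ Vlevel f 2 = A}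

/-- Nice Roman domination property. -/
def IsNiceRDP (G : SimpleGraph V) (P : (V → ℕ) → Prop) : Prop :=
  (∀ f, P f → IsRDF G f) ∧
  (∀ f, P f → ∀ v ∈ Vlevel f 0, P (f + chi {v})) ∧
  (∀ f, P f → ∀ v ∈ Vlevel f 2,
    (P (f - chi {v}) ↔ privNbhd G (Vlevel f 0 ∪ Vlevel f 2) (Vlevel f 2) v ⊆ {v}))

/-- Maximal Roman dominating function: an Rdf such that `V_0(f)` is not a dominating set. -/
def IsMRDF (G : SimpleGraph V) (f : V → ℕ) : Prop :=
  IsRDF G f ∧ closedNbhdSet G (Vlevel f 0) ≠ Set.univ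

/-- Total Roman dominating function: an Rdf such that `G[V_1(f) ∪ V_2(f)]` has no isolated
vertices. -/
def IsTRDF (G : SimpleGraph V) (f : V → ℕ) : Prop :=
  IsRDF G f ∧ ∀ v ∈ Vlevel f 1 ∪ Vlevel f 2, ∃ u ∈ Vlevel f 1 ∪ Vlevel f 2, G.Adj v u

/-- Connected Roman dominating function: an Rdf such that `G[V_1(f) ∪ V_2(f)]` is connected. -/
def IsCRDF (G : SimpleGraph V) (f : V → ℕ) : Prop :=
  IsRDF G f ∧ (G.induce (Vlevel f 1 ∪ Vlevel f 2)).Connected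

open Classical in
lemma chi_apply (v u : V) : chi {v} u = if u = v then 1 else 0 := by
  by_cases h : u = v <;> simp [chi, h]

lemma closedNbhdSet_mono (G : SimpleGraph V) {A B : Set V} (h : A ⊆ B) :
    closedNbhdSet G A ⊆ closedNbhdSet G B :=
  Set.biUnion_subset_biUnion_left h

/-- being a maximal Roman dominating function is a nice Roman domination
property. -/
theorem stmt6 [Fintype V] (G : SimpleGraph V) (f : V → ℕ) (hf : IsMRDF G f) :
    (∀ v ∈ Vlevel f 0, IsMRDF G (f + chi {v})) ∧
    (∀ v ∈ Vlevel f 2,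
      (IsMRDF G (f - chi {v}) ↔
        privNbhd G (Vlevel f 0 ∪ Vlevel f 2) (Vlevel f 2) v ⊆ {v})) := by
  classical
  obtain ⟨⟨hle, hrdf⟩, hnd⟩ := hf
  constructor
  · -- part (i)
    intro v hv
    have hv0 : f v = 0 := hv
    have hg : ∀ u, (f + chi {v}) u = if u = v then 1 else f u := by
      intro u
      by_cases h : u = v
      · subst h; simp [chi_apply, hv0]
      · simp [chi_apply, h]
    refine ⟨⟨?_, ?_⟩, ?_⟩
    · intro u; rw [hg]; split
      · omega
      · exact hle u
    · intro u hu
      rw [hg] at hu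
      have huv : u ≠ v := by intro h; rw [if_pos h] at hu; omega
      rw [if_neg huv] at hu
      obtain ⟨w, hw, hw2⟩ := hrdf u hu
      have hwv : w ≠ v := by intro h; rw [h, hv0] at hw2; omega
      exact ⟨w, hw, by rw [hg, if_neg hwv]; exact hw2⟩
    · intro hcon
      apply hnd
      apply Set.eq_univ_of_univ_subset
      rw [← hcon]
      apply closedNbhdSet_mono
      intro u hu
      have : (f + chi {v}) u = 0 := hu
      rw [hg] at this
      by_cases h : u = v
      · rw [if_pos h] at this; omega
      · rw [if_neg h] at this; exact this
  · -- part (ii)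
    intro v hv
    have hv2 : f v = 2 := hv
    have hg : ∀ u, (f - chi {v}) u = if u = v then 1 else f u := by
      intro u
      by_cases h : u = v
      · subst h; simp [chi_apply, hv2]
      · simp [chi_apply, h]
    have hV0 : Vlevel (f - chi {v}) 0 = Vlevel f 0 := by
      ext u
      simp only [Vlevel, Set.mem_setOf_eq, hg]
      by_cases h : u = v
      · subst h; rw [if_pos rfl, hv2]; omega
      · rw [if_neg h]
    constructor
    · -- MRDF → priv ⊆ {v}
      rintro ⟨⟨_, hrdf'⟩, _⟩ u hu
      simp only [privNbhd, closedNbhdIn, closedNbhdSetIn, Set.mem_diff,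
        Set.mem_setOf_eq, Set.mem_iUnion, not_exists] at hu
      obtain ⟨⟨huW, huv⟩, hnot⟩ := hu
      by_contra hne
      have hne' : u ≠ v := hne
      have hadj : G.Adj u v := huv.resolve_left hne'
      rcases huW with hu0 | hu2
      · -- u ∈ V0 f : get neighbor w with (f - chi v) w = 2
        have hu0' : (f - chi {v}) u = 0 := by rw [hg, if_neg hne']; exact hu0
        obtain ⟨w, hw, hw2⟩ := hrdf' u hu0'
        rw [hg] at hw2
        have hwv : w ≠ v := by intro h; rw [if_pos h] at hw2; omega
        rw [if_neg hwv] at hw2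
        exact hnot w ⟨hw2, hwv⟩ ⟨Or.inl hu0, Or.inr hw⟩
      · -- u ∈ V2 f : u itself witnesses
        exact hnot u ⟨hu2, hne'⟩ ⟨Or.inr hu2, Or.inl rfl⟩
    · intro hpriv
      refine ⟨⟨?_, ?_⟩, ?_⟩
      · intro u; rw [hg]; split
        · omega
        · exact hle u
      · intro u hu
        rw [hg] at hu
        have huv : u ≠ v := by intro h; rw [if_pos h] at hu; omega
        rw [if_neg huv] at hu
        obtain ⟨w, hw, hw2⟩ := hrdf u hu
        by_cases hwv : w = v
        · -- u adjacent to v, u ∈ V0, so u ∈ N_W[v]; priv ⊆ {v} gives another neighbor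
          subst hwv
          have hu_mem : u ∈ closedNbhdIn G (Vlevel f 0 ∪ Vlevel f 2) w :=
            ⟨Or.inl hu, Or.inr hw⟩
          have : u ∉ ({w} : Set V) := huv
          have hu_in : u ∈ closedNbhdSetIn G (Vlevel f 0 ∪ Vlevel f 2)
              (Vlevel f 2 \ {w}) := by
            by_contra hcon
            exact this (hpriv ⟨hu_mem, hcon⟩)
          simp only [closedNbhdSetIn, Set.mem_iUnion] at hu_in
          obtain ⟨x, ⟨hx2, hxv⟩, hxW, hxadj⟩ := hu_in
          have hxv' : x ≠ w := hxv
          have hadj' : G.Adj u x := by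
            rcases hxadj with h | h
            · exfalso
              have hx2' : f x = 2 := hx2
              rw [h] at hu
              omega
            · exact h
          refine ⟨x, hadj', ?_⟩
          rw [hg, if_neg hxv']; exact hx2
        · exact ⟨w, hw, by rw [hg, if_neg hwv]; exact hw2⟩
      · rw [hV0]; exact hnd
end

section
/- Let G=(V,E) be a finite simple graph and f : V → {0,1,2}. Then f is a minimal total Roman dominating function if and only if the following three conditions hold: (1) f is a total Roman dominating function; (2) for all v ∈ V_1(f), either N(v) ∩ V_2(f) = ∅ or the induced subgraph G[(V_1(f) ∪ V_2(f)) ∖ {v}] has an isolated vertex; (3) for all v ∈ V_2(f), P_{G[V_0(f) ∪ V_2(f)], V_2(f)}(v) ⊈ {v}. -/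
open Set

variable {V : Type*}

lemma mem_priv_iff (G : SimpleGraph V) (W A : Set V) (v u : V) :
    u ∈ privNbhd G W A v ↔
      (u ∈ W ∧ (u = v ∨ G.Adj u v)) ∧
      ∀ w, w ∈ A → w ≠ v → ¬ (u ∈ W ∧ (u = w ∨ G.Adj u w)) := by
  simp only [privNbhd, closedNbhdIn, closedNbhdSetIn, Set.mem_diff, Set.mem_setOf_eq,
    Set.mem_iUnion, Set.mem_singleton_iff, not_exists]
  constructor
  · rintro ⟨h1, h2⟩
    exact ⟨h1, fun w hw hwv => h2 w ⟨hw, hwv⟩⟩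
  · rintro ⟨h1, h2⟩
    exact ⟨h1, fun w hw => h2 w hw.1 hw.2⟩

lemma mem_lvl {f : V → ℕ} {i : ℕ} {v : V} : v ∈ Vlevel f i ↔ f v = i := Iff.rfl

/-- characterization of minimal total Roman dominating functions. -/
theorem stmt8 [Fintype V] (G : SimpleGraph V) (f : V → ℕ) (hf : ∀ v, f v ≤ 2) :
    MinimalWrt (IsTRDF G) f ↔
      (IsTRDF G f ∧
       (∀ v ∈ Vlevel f 1,
          G.neighborSet v ∩ Vlevel f 2 = ∅ ∨
          (∃ u ∈ (Vlevel f 1 ∪ Vlevel f 2) \ {v},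
            ∀ w ∈ (Vlevel f 1 ∪ Vlevel f 2) \ {v}, ¬ G.Adj u w)) ∧
       (∀ v ∈ Vlevel f 2,
          ¬ privNbhd G (Vlevel f 0 ∪ Vlevel f 2) (Vlevel f 2) v ⊆ {v})) := by
  classical
  constructor
  · rintro ⟨hT, hmin⟩
    refine ⟨hT, ?_, ?_⟩
    · -- condition (2)
      intro v hv
      have hfv : f v = 1 := hv
      by_cases h1 : G.neighborSet v ∩ Vlevel f 2 = ∅
      · exact Or.inl h1
      · right
        by_contra hno
        push_neg at hno
        obtain ⟨t, ht⟩ := Set.nonempty_iff_ne_empty.2 h1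
        have htadj : G.Adj v t := ht.1
        have hft : f t = 2 := ht.2
        set g := Function.update f v 0 with hg
        have hgw : ∀ w, w ≠ v → g w = f w := fun w hw => Function.update_of_ne hw _ _
        have hgv : g v = 0 := Function.update_self _ _ _
        have hlev : Vlevel g 1 ∪ Vlevel g 2 = (Vlevel f 1 ∪ Vlevel f 2) \ {v} := by
          ext w
          by_cases hw : w = v
          · subst hw
            simp [mem_lvl, Set.mem_union, Set.mem_diff, hgv]
          · simp [mem_lvl, Set.mem_union, Set.mem_diff, hgw w hw, hw]
        have hgT : IsTRDF G g := by
          refine ⟨⟨?_, ?_⟩, ?_⟩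
          · intro w
            by_cases hw : w = v
            · subst hw; rw [hgv]; omega
            · rw [hgw w hw]; exact hf w
          · intro w hw0
            by_cases hw : w = v
            · rw [hw]
              refine ⟨t, htadj, ?_⟩
              have htv : t ≠ v := fun h => by rw [h] at hft; omega
              rw [hgw t htv]; exact hft
            · rw [hgw w hw] at hw0
              obtain ⟨u, hu, hu2⟩ := hT.1.2 w hw0
              have huv : u ≠ v := fun h => by rw [h] at hu2; omega
              exact ⟨u, hu, by rw [hgw u huv]; exact hu2⟩
          · rw [hlev]
            exact hno
        have hle : g ≤ f := by
          intro w
          by_cases hw : w = v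
          · rw [hw, hgv]; exact Nat.zero_le _
          · rw [hgw w hw]
        have := hmin g hgT hle
        have : g v = f v := by rw [this]
        rw [hgv, hfv] at this; omega
    · -- condition (3)
      intro v hv
      have hfv : f v = 2 := hv
      intro hsub
      set g := Function.update f v 1 with hg
      have hgw : ∀ w, w ≠ v → g w = f w := fun w hw => Function.update_of_ne hw _ _
      have hgv : g v = 1 := Function.update_self _ _ _
      have hlev : Vlevel g 1 ∪ Vlevel g 2 = Vlevel f 1 ∪ Vlevel f 2 := by
        ext w
        by_cases hw : w = v
        · subst hw
          simp [mem_lvl, Set.mem_union, hgv, hfv]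
        · simp [mem_lvl, Set.mem_union, hgw w hw]
      have hgT : IsTRDF G g := by
        refine ⟨⟨?_, ?_⟩, ?_⟩
        · intro w
          by_cases hw : w = v
          · subst hw; rw [hgv]; omega
          · rw [hgw w hw]; exact hf w
        · intro w hw0
          have hwv : w ≠ v := fun h => by rw [h, hgv] at hw0; omega
          rw [hgw w hwv] at hw0
          obtain ⟨t, hadj, ht2⟩ := hT.1.2 w hw0
          by_cases htv : t = v
          · have hadjv : G.Adj w v := by rw [htv] at hadj; exact hadj
            have hwW : w ∈ Vlevel f 0 ∪ Vlevel f 2 := Or.inl hw0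
            have hwnp : w ∉ privNbhd G (Vlevel f 0 ∪ Vlevel f 2) (Vlevel f 2) v := by
              intro h
              exact hwv (hsub h)
            rw [mem_priv_iff] at hwnp
            push_neg at hwnp
            obtain ⟨s, hs2, hsv, hw2⟩ := hwnp ⟨hwW, Or.inr hadjv⟩
            have hws : w ≠ s := by
              intro h
              have hs2' : f s = 2 := hs2
              rw [h] at hw0
              omega
            have hadj2 : G.Adj w s := (hw2.2).resolve_left hws
            refine ⟨s, hadj2, ?_⟩
            rw [hgw s hsv]; exact hs2
          · exact ⟨t, hadj, by rw [hgw t htv]; exact ht2⟩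
        · rw [hlev]
          exact hT.2
      have hle : g ≤ f := by
        intro w
        by_cases hw : w = v
        · rw [hw, hgv, hfv]; exact one_le_two
        · rw [hgw w hw]
      have := hmin g hgT hle
      have : g v = f v := by rw [this]
      rw [hgv, hfv] at this; omega
  · rintro ⟨hT, h2, h3⟩
    refine ⟨hT, ?_⟩
    intro g hgT hgf
    by_contra hne
    obtain ⟨v, hv⟩ := Function.ne_iff.1 hne
    have hlt : g v < f v := lt_of_le_of_ne (hgf v) hv
    have hgflev : g v ≤ f v := hgf v
    have hfv2 : f v = 1 ∨ f v = 2 := by have := hf v; omega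
    rcases hfv2 with hfv | hfv
    · -- f v = 1, so g v = 0
      have hgv : g v = 0 := by omega
      obtain ⟨t, hadj, ht2⟩ := hgT.1.2 v hgv
      have hft : f t = 2 := le_antisymm (hf t) (ht2 ▸ hgf t)
      have hne1 : ¬ (G.neighborSet v ∩ Vlevel f 2 = ∅) := by
        intro h
        have : t ∈ G.neighborSet v ∩ Vlevel f 2 := ⟨hadj, hft⟩
        rw [h] at this; exact this
      obtain ⟨u, hu, hiso⟩ := (h2 v hfv).resolve_left hne1
      by_cases hgu : g u = 0
      · obtain ⟨t', hadj', ht2'⟩ := hgT.1.2 u hgu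
        have hft' : f t' = 2 := le_antisymm (hf t') (ht2' ▸ hgf t')
        have ht'v : t' ≠ v := fun h => by rw [h, hfv] at hft'; omega
        exact hiso t' ⟨Or.inr hft', ht'v⟩ hadj'
      · have hgu12 : g u = 1 ∨ g u = 2 := by
          have h2u : g u ≤ 2 := hgT.1.1 u
          omega
        have : u ∈ Vlevel g 1 ∪ Vlevel g 2 := by
          rcases hgu12 with h | h
          · exact Or.inl h
          · exact Or.inr h
        obtain ⟨w, hw, hadjw⟩ := hgT.2 u this
        have hgw1 : 1 ≤ g w := by
          rcases hw with h | h
          · rw [mem_lvl] at h; omega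
          · rw [mem_lvl] at h; omega
        have hfw : f w = 1 ∨ f w = 2 := by
          have ha : g w ≤ f w := hgf w; have hb := hf w; omega
        have hwv : w ≠ v := fun h => by rw [h, hgv] at hgw1; omega
        have hwmem : w ∈ (Vlevel f 1 ∪ Vlevel f 2) \ {v} := by
          rcases hfw with h | h
          · exact ⟨Or.inl h, hwv⟩
          · exact ⟨Or.inr h, hwv⟩
        exact hiso w hwmem hadjw
    · -- f v = 2
      obtain ⟨u, hu, hune⟩ := Set.not_subset.1 (h3 v hfv)
      rw [mem_priv_iff] at hu
      obtain ⟨⟨huW, _⟩, hpriv⟩ := hu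
      have hfu : f u = 0 := by
        rcases huW with h | h
        · exact h
        · exact absurd ⟨Or.inr h, Or.inl rfl⟩ (hpriv u h hune)
      have hgu : g u = 0 := by have ha : g u ≤ f u := hgf u; omega
      obtain ⟨t, hadj, ht2⟩ := hgT.1.2 u hgu
      have hft : f t = 2 := le_antisymm (hf t) (ht2 ▸ hgf t)
      have htv : t ≠ v := fun h => by rw [h] at ht2; omega
      exact hpriv t hft htv ⟨huW, Or.inr hadj⟩
end

section
/- The property of being a connected Roman dominating function is a nice Roman domination property; concretely, for every finite simple graph G=(V,E) and every connected Roman dominating function f on G: (i) for every v ∈ V_0(f), the function f + χ_{{v}} is a connected Roman dominating function; and (ii) for every v ∈ V_2(f), the function f − χ_{{v}} is a connected Roman dominating function if and only if P_{G[V_0(f) ∪ V_2(f)], V_2(f)}(v) ⊆ {v}. -/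
open Set

variable {V : Type*}

lemma reachable_induce_mono (G : SimpleGraph V) {S T : Set V} (h : S ⊆ T) {a b : V}
    (ha : a ∈ S) (hb : b ∈ S) (hr : (G.induce S).Reachable ⟨a, ha⟩ ⟨b, hb⟩) :
    (G.induce T).Reachable ⟨a, h ha⟩ ⟨b, h hb⟩ :=
  hr.map (⟨fun x => ⟨x.1, h x.2⟩, fun hadj => hadj⟩ : G.induce S →g G.induce T)

lemma connected_insert (G : SimpleGraph V) {S : Set V} (hS : (G.induce S).Connected)
    {v u : V} (hu : u ∈ S) (huv : G.Adj v u) : (G.induce (S ∪ {v})).Connected := by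
  rw [SimpleGraph.connected_iff]
  refine ⟨?_, ⟨⟨u, Or.inl hu⟩⟩⟩
  have key : ∀ a : (S ∪ {v} : Set V),
      (G.induce (S ∪ {v})).Reachable a ⟨u, Or.inl hu⟩ := by
    rintro ⟨a, ha | ha⟩
    · exact reachable_induce_mono G Set.subset_union_left ha hu
        (hS.preconnected ⟨a, ha⟩ ⟨u, hu⟩)
    · have : a = v := ha
      subst this
      exact SimpleGraph.Adj.reachable (by exact huv)
  intro a b
  exact (key a).trans (key b).symm


lemma chi_self (v : V) : chi {v} v = 1 := by simp [chi]
lemma chi_other {u v : V} (h : u ≠ v) : chi {v} u = 0 := by simp [chi, h]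


/-- being a connected Roman dominating function is a nice Roman domination
property. -/
theorem stmt11 [Fintype V] (G : SimpleGraph V) (f : V → ℕ) (hf : IsCRDF G f) :
    (∀ v ∈ Vlevel f 0, IsCRDF G (f + chi {v})) ∧
    (∀ v ∈ Vlevel f 2,
      (IsCRDF G (f - chi {v}) ↔
        privNbhd G (Vlevel f 0 ∪ Vlevel f 2) (Vlevel f 2) v ⊆ {v})) := by
  constructor
  · -- part (i)
    intro v hv
    have hv0 : f v = 0 := hv
    set g : V → ℕ := f + chi {v} with hg
    have hgv : g v = 1 := by simp [hg, Pi.add_apply, hv0, chi_self]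
    have hgu : ∀ u, u ≠ v → g u = f u := fun u hu => by
      simp [hg, Pi.add_apply, chi_other hu]
    refine ⟨⟨?_, ?_⟩, ?_⟩
    · intro u
      by_cases h : u = v
      · subst h; omega
      · rw [hgu u h]; exact hf.1.1 u
    · intro u h0
      have hne : u ≠ v := fun h => by rw [h, hgv] at h0; omega
      rw [hgu u hne] at h0
      obtain ⟨w, hadj, hw2⟩ := hf.1.2 u h0
      have hwv : w ≠ v := fun h => by rw [h, hv0] at hw2; omega
      exact ⟨w, hadj, by rw [hgu w hwv]; exact hw2⟩
    · have hset : Vlevel g 1 ∪ Vlevel g 2 = (Vlevel f 1 ∪ Vlevel f 2) ∪ {v} := by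
        ext u
        by_cases h : u = v
        · subst h
          simp [Vlevel, hgv, hv0]
        · have := hgu u h
          simp only [Vlevel, Set.mem_union, Set.mem_setOf_eq, Set.mem_singleton_iff, this]
          tauto
      rw [hset]
      obtain ⟨w, hadj, hw2⟩ := hf.1.2 v hv0
      exact connected_insert G hf.2 (Or.inr hw2) hadj
  · -- part (ii)
    intro v hv
    have hv2 : f v = 2 := hv
    set g : V → ℕ := f - chi {v} with hg
    have hgv : g v = 1 := by simp [hg, Pi.sub_apply, hv2, chi_self]
    have hgu : ∀ u, u ≠ v → g u = f u := fun u hu => by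
      simp [hg, Pi.sub_apply, chi_other hu]
    have hset : Vlevel g 1 ∪ Vlevel g 2 = Vlevel f 1 ∪ Vlevel f 2 := by
      ext u
      by_cases h : u = v
      · subst h
        simp [Vlevel, hgv, hv2]
      · have := hgu u h
        simp only [Vlevel, Set.mem_union, Set.mem_setOf_eq, this]
    constructor
    · intro hgc
      intro u hu
      obtain ⟨⟨huW, hcase⟩, hnot⟩ := hu
      by_contra hne
      have hne' : u ≠ v := hne
      have hadjuv : G.Adj u v := hcase.resolve_left hne'
      have hmem : ∀ w, f w = 2 → w ≠ v → (u = w ∨ G.Adj u w) → False := by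
        intro w hw2 hwv hc
        exact hnot (Set.mem_biUnion ⟨hw2, hwv⟩ ⟨huW, hc⟩)
      rcases huW with hu0 | hu2
      · have hu0 : f u = 0 := hu0
        have : g u = 0 := by rw [hgu u hne']; exact hu0
        obtain ⟨w, hadj, hw2⟩ := hgc.1.2 u this
        have hwv : w ≠ v := fun h => by rw [h, hgv] at hw2; omega
        rw [hgu w hwv] at hw2
        exact hmem w hw2 hwv (Or.inr hadj)
      · exact hmem u hu2 hne' (Or.inl rfl)
    · intro hpriv
      refine ⟨⟨?_, ?_⟩, ?_⟩
      · intro u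
        calc g u ≤ f u := Nat.sub_le _ _
          _ ≤ 2 := hf.1.1 u
      · intro u h0
        have hne : u ≠ v := fun h => by rw [h, hgv] at h0; omega
        rw [hgu u hne] at h0
        by_cases hu : u ∈ closedNbhdSetIn G (Vlevel f 0 ∪ Vlevel f 2) (Vlevel f 2 \ {v})
        · obtain ⟨w, hw, huw⟩ := Set.mem_iUnion₂.mp hu
          obtain ⟨hw2, hwv⟩ := hw
          have hwv : w ≠ v := hwv
          have hc : u = w ∨ G.Adj u w := huw.2
          have : G.Adj u w := by
            rcases hc with h | h
            · exfalso; rw [h] at h0; have h2 : f w = 2 := hw2; omega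
            · exact h
          exact ⟨w, this, by rw [hgu w hwv]; exact hw2⟩
        · obtain ⟨w, hadj, hw2⟩ := hf.1.2 u h0
          by_cases hwv : w = v
          · subst hwv
            have : u ∈ privNbhd G (Vlevel f 0 ∪ Vlevel f 2) (Vlevel f 2) w :=
              ⟨⟨Or.inl h0, Or.inr hadj⟩, hu⟩
            exact absurd (hpriv this) hne
          · exact ⟨w, hadj, by rw [hgu w hwv]; exact hw2⟩
      · rw [hset]; exact hf.2
end
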